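/- arXiv:2302.01705 — 2 statements merged into one kernel-verified Lean document; each statement's English description precedes it below -/
import Mathlib

section
/- For every C* > 0 there exists a constant C > 0, depending only on C*, such that the following holds. Let κ = conv{x,y,z} ⊂ ℝ³ be a C*-regular triangle with unit normal n̄(κ), and let ν₁, ν₂ ∈ ℝ³ be unit vectors with ν₁·(y−x) = 0, ν₂·(z−y) = 0, and ν₁·n̄(κ) ≥ 0. Then |ν₁ − n̄(κ)| ≤ C·|ν₁ − ν₂|. -/
open scoped RealInnerProductSpace

noncomputable section

/-- Euclidean 3-space. -/
abbrev E3 := EuclideanSpace ℝ (Fin 3)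

/-- The cross product on `ℝ³`. -/
def cross3 (u v : E3) : E3 :=
  (WithLp.equiv 2 (Fin 3 → ℝ)).symm
    ![u 1 * v 2 - u 2 * v 1, u 2 * v 0 - u 0 * v 2, u 0 * v 1 - u 1 * v 0]

/-- The diameter of the triangle `conv{x,y,z}`. -/
def diam3 (x y z : E3) : ℝ := max ‖y - x‖ (max ‖z - x‖ ‖z - y‖)

/-- The area of the triangle `conv{x,y,z}`. -/
def area3 (x y z : E3) : ℝ := ‖cross3 (y - x) (z - x)‖ / 2

/-- The unit normal `n̄(κ)` of the triangle `κ = conv{x,y,z}`. -/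
def unitNormal (x y z : E3) : E3 :=
  ‖cross3 (y - x) (z - x)‖⁻¹ • cross3 (y - x) (z - x)

/-
Write `u = y - x`, `w = z - y` and `N = u × (z - x)`. For a unit vector `ν ⊥ u`, Lagrange's
identity gives `‖N‖² (1 - ⟪ν, N/‖N‖⟫²) = ‖u‖² ⟪ν, z - x⟫²`, and since `z - x = u + w`,
`ν₁ ⊥ u` and `ν₂ ⊥ w`, we have `⟪ν₁, z - x⟫ = ⟪ν₁ - ν₂, w⟫`. Hence the component of `ν₁`
orthogonal to the normal is at most `diam² ‖ν₁ - ν₂‖ / ‖N‖ ≤ ‖ν₁ - ν₂‖ / (2 C*)` by regularity,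
and for unit vectors at an acute angle this component controls their distance.
-/

section InnerProductSpace

variable {F : Type*} [NormedAddCommGroup F] [InnerProductSpace ℝ F]

theorem norm_sub_sq_le_two_mul_one_sub_inner_sq {a b : F} (ha : ‖a‖ = 1) (hb : ‖b‖ = 1)
    (hab : 0 ≤ ⟪a, b⟫) : ‖a - b‖ ^ 2 ≤ 2 * (1 - ⟪a, b⟫ ^ 2) := by
  have hle : ⟪a, b⟫ ≤ 1 := by simpa [ha, hb] using real_inner_le_norm a b
  rw [norm_sub_sq_real, ha, hb]
  nlinarith

theorem inner_sub_eq_inner_sub_of_inner_eq_zero {ν₁ ν₂ x y z : F} (h₁ : ⟪ν₁, y - x⟫ = 0)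
    (h₂ : ⟪ν₂, z - y⟫ = 0) : ⟪ν₁, z - x⟫ = ⟪ν₁ - ν₂, z - y⟫ := by
  rw [← sub_add_sub_cancel z y x, inner_add_right, h₁, inner_sub_left, h₂]
  ring

end InnerProductSpace

theorem norm_sq_mul_norm_cross3_sq (ν u v : E3) :
    ‖ν‖ ^ 2 * ‖cross3 u v‖ ^ 2 = ⟪ν, cross3 u v⟫ ^ 2 + ‖u‖ ^ 2 * ⟪ν, v⟫ ^ 2
      - 2 * ⟪ν, u⟫ * ⟪ν, v⟫ * ⟪u, v⟫ + ‖v‖ ^ 2 * ⟪ν, u⟫ ^ 2 := by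
  simp only [← real_inner_self_eq_norm_sq, cross3, PiLp.inner_apply, RCLike.inner_apply,
    conj_trivial, Fin.sum_univ_three, WithLp.equiv_symm_apply,
    Matrix.cons_val_zero, Matrix.cons_val_one, Matrix.cons_val_two, Matrix.head_cons,
    Matrix.tail_cons]
  ring

theorem norm_sq_mul_norm_cross3_sq_of_inner_eq_zero {ν u : E3} (v : E3) (h : ⟪ν, u⟫ = 0) :
    ‖ν‖ ^ 2 * ‖cross3 u v‖ ^ 2 = ⟪ν, cross3 u v⟫ ^ 2 + ‖u‖ ^ 2 * ⟪ν, v⟫ ^ 2 := by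
  simp [norm_sq_mul_norm_cross3_sq, h]

theorem norm_unitNormal {x y z : E3} (h : cross3 (y - x) (z - x) ≠ 0) :
    ‖unitNormal x y z‖ = 1 := by
  rw [unitNormal, norm_smul, norm_inv, norm_norm, inv_mul_cancel₀ (norm_ne_zero_iff.2 h)]

theorem inner_unitNormal_mul_norm_cross3 (ν x y z : E3) :
    ⟪ν, unitNormal x y z⟫ * ‖cross3 (y - x) (z - x)‖ = ⟪ν, cross3 (y - x) (z - x)⟫ := by
  rcases eq_or_ne (cross3 (y - x) (z - x)) 0 with h | h
  · simp [unitNormal, h]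
  · rw [unitNormal, real_inner_smul_right, mul_comm, mul_inv_cancel_left₀ (norm_ne_zero_iff.2 h)]

theorem norm_cross3_sq_mul_one_sub_inner_unitNormal_sq {ν x y z : E3} (hν : ‖ν‖ = 1)
    (h : ⟪ν, y - x⟫ = 0) :
    ‖cross3 (y - x) (z - x)‖ ^ 2 * (1 - ⟪ν, unitNormal x y z⟫ ^ 2)
      = ‖y - x‖ ^ 2 * ⟪ν, z - x⟫ ^ 2 := by
  have := norm_sq_mul_norm_cross3_sq_of_inner_eq_zero (z - x) h
  rw [hν, ← inner_unitNormal_mul_norm_cross3] at this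
  linear_combination this

theorem mul_norm_sub_unitNormal_le {Cstar : ℝ} (hCstar : 0 < Cstar) {x y z ν₁ ν₂ : E3}
    (hxy : x ≠ y) (hreg : Cstar * diam3 x y z ^ 2 ≤ area3 x y z) (h₁ : ‖ν₁‖ = 1)
    (hν₁ : ⟪ν₁, y - x⟫ = 0) (hν₂ : ⟪ν₂, z - y⟫ = 0) (hpos : 0 ≤ ⟪ν₁, unitNormal x y z⟫) :
    Cstar * ‖ν₁ - unitNormal x y z‖ ≤ ‖ν₁ - ν₂‖ := by
  set d := diam3 x y z
  set N := cross3 (y - x) (z - x)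
  have hu : ‖y - x‖ ≤ d := le_max_left _ _
  have hw : ‖z - y‖ ≤ d := (le_max_right _ _).trans (le_max_right _ _)
  have hd : 0 < d := (norm_pos_iff.2 (sub_ne_zero.2 hxy.symm)).trans_le hu
  have hN : 2 * Cstar * d ^ 2 ≤ ‖N‖ := by rw [area3] at hreg; linarith
  have hN₀ : N ≠ 0 := norm_pos_iff.1 ((by positivity : 0 < 2 * Cstar * d ^ 2).trans_le hN)
  have hdist := norm_sub_sq_le_two_mul_one_sub_inner_sq h₁ (norm_unitNormal hN₀) hpos
  have hperp := norm_cross3_sq_mul_one_sub_inner_unitNormal_sq (z := z) h₁ hν₁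
  rw [inner_sub_eq_inner_sub_of_inner_eq_zero hν₁ hν₂] at hperp
  have hcs : ⟪ν₁ - ν₂, z - y⟫ ^ 2 ≤ (‖ν₁ - ν₂‖ * d) ^ 2 := by
    rw [← sq_abs]
    gcongr
    exact (abs_real_inner_le_norm _ _).trans (by gcongr)
  suffices (2 * d ^ 2 * (Cstar * ‖ν₁ - unitNormal x y z‖)) ^ 2 ≤ (2 * d ^ 2 * ‖ν₁ - ν₂‖) ^ 2 by
    have := le_of_sq_le_sq this (by positivity)
    exact le_of_mul_le_mul_left this (by positivity)
  calc (2 * d ^ 2 * (Cstar * ‖ν₁ - unitNormal x y z‖)) ^ 2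
      = (2 * Cstar * d ^ 2) ^ 2 * ‖ν₁ - unitNormal x y z‖ ^ 2 := by ring
    _ ≤ ‖N‖ ^ 2 * (2 * (1 - ⟪ν₁, unitNormal x y z⟫ ^ 2)) := by gcongr
    _ = 2 * (‖y - x‖ ^ 2 * ⟪ν₁ - ν₂, z - y⟫ ^ 2) := by rw [← hperp]; ring
    _ ≤ 2 * (d ^ 2 * (‖ν₁ - ν₂‖ * d) ^ 2) := by gcongr
    _ ≤ (2 * d ^ 2 * ‖ν₁ - ν₂‖) ^ 2 := by nlinarith [sq_nonneg (d ^ 2 * ‖ν₁ - ν₂‖)]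

/-- a unit edge director (unit vector orthogonal to an edge,
pointing to the same side as the triangle normal) is close to the triangle
normal in terms of its difference from a unit edge director of a second edge. -/
theorem stmt_1 (Cstar : ℝ) (hCstar : 0 < Cstar) :
    ∃ C > (0 : ℝ), ∀ (x y z ν₁ ν₂ : E3),
      ¬ Collinear ℝ ({x, y, z} : Set E3) →
      Cstar * diam3 x y z ^ 2 ≤ area3 x y z →
      ‖ν₁‖ = 1 → ‖ν₂‖ = 1 →
      ⟪ν₁, y - x⟫ = 0 →
      ⟪ν₂, z - y⟫ = 0 →
      0 ≤ ⟪ν₁, unitNormal x y z⟫ →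
      ‖ν₁ - unitNormal x y z‖ ≤ C * ‖ν₁ - ν₂‖ := by
  refine ⟨Cstar⁻¹, inv_pos.2 hCstar, fun x y z ν₁ ν₂ hcol hreg h₁ _ hν₁ hν₂ hpos => ?_⟩
  have hxy : x ≠ y := by
    rintro rfl
    exact hcol (by simpa using collinear_pair ℝ x z)
  rw [le_inv_mul_iff₀ hCstar]
  exact mul_norm_sub_unitNormal_le hCstar hxy hreg h₁ hν₁ hν₂ hpos
end
end

section
/- For every C* > 0 there exists a constant C > 0, depending only on C*, with the following property. Let κ = conv{x,y,z} ⊂ ℝ³ be a C*-regular triangle with unit normal n̄(κ), let N : ℝ³ → ℝ³ be an affine map with linear part L, let D = L∘P with P the orthogonal projection of ℝ³ onto span{y−x, z−x}, and let m₁ = (x+y)/2 and m₂ = (y+z)/2. Assume only the orthogonality conditions N(m₁)·(y−x) = 0 and N(m₂)·(z−y) = 0 (no normalization of N(m₁), N(m₂) is assumed). Then |n̄(κ) × N(m₁)| ≤ C·diam(κ)·‖D‖. -/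
/-!
With `a = y - x`, `b = z - x` and `v = N(m₁)`, the triple product expansion and `⟪v, a⟫ = 0` give
`(a × b) × v = -⟪v, z - y⟫ a`. Since `m₂ - m₁ = b / 2` is tangential, `N(m₂) = v + D(b / 2)`, so the
second orthogonality condition turns `⟪v, z - y⟫` into `-⟪D(b / 2), z - y⟫`, of size at most
`‖D‖ diam(κ)² / 2`. Dividing by `|a × b| = 2 area(κ) ≥ 2 C* diam(κ)²` gives the estimate with
`C = 1 / (4 C*)`.
-/

open scoped RealInnerProductSpace

noncomputable section

/-- The orthogonal projection of `ℝ³` onto the tangent plane `span{y−x, z−x}`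
of the triangle `conv{x,y,z}`, as a map `ℝ³ → ℝ³`. -/
def tangentProj (x y z : E3) : E3 →L[ℝ] E3 :=
  (Submodule.span ℝ {y - x, z - x}).subtypeL ∘L
    Submodule.orthogonalProjection (Submodule.span ℝ {y - x, z - x})

/-- The tangentially projected linear part `D = L∘P` of an affine map `N` with
linear part `L`, relative to the triangle `conv{x,y,z}`. -/
def tangGrad (N : E3 →ᵃ[ℝ] E3) (x y z : E3) : E3 →L[ℝ] E3 :=
  (LinearMap.toContinuousLinearMap N.linear) ∘L tangentProj x y z

lemma inner_E3_eq (u v : E3) : ⟪u, v⟫ = u 0 * v 0 + u 1 * v 1 + u 2 * v 2 := by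
  simp only [PiLp.inner_apply, RCLike.inner_apply, Fin.sum_univ_three, conj_trivial]
  ring

lemma cross3_apply (u v : E3) (i : Fin 3) :
    cross3 u v i = ![u 1 * v 2 - u 2 * v 1, u 2 * v 0 - u 0 * v 2, u 0 * v 1 - u 1 * v 0] i :=
  rfl

lemma cross3_smul_left (s : ℝ) (u v : E3) : cross3 (s • u) v = s • cross3 u v := by
  ext i
  fin_cases i <;> simp [cross3_apply] <;> ring

lemma cross3_cross3_left (a b w : E3) :
    cross3 (cross3 a b) w = ⟪w, a⟫ • b - ⟪w, b⟫ • a := by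
  ext i
  fin_cases i <;> simp [cross3_apply, inner_E3_eq] <;> ring

lemma norm_cross3_unitNormal_of_inner_eq_zero {x y z v : E3} (h : ⟪v, y - x⟫ = 0) :
    ‖cross3 (unitNormal x y z) v‖ =
      |⟪v, z - y⟫| * ‖y - x‖ / ‖cross3 (y - x) (z - x)‖ := by
  have hvb : ⟪v, z - x⟫ = ⟪v, z - y⟫ := by
    rw [← sub_add_sub_cancel z y x, inner_add_right, h, add_zero]
  rw [unitNormal, cross3_smul_left, cross3_cross3_left, h, hvb, zero_smul, zero_sub,
    norm_smul, norm_neg, norm_smul, norm_inv, norm_norm, Real.norm_eq_abs]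
  ring

lemma tangGrad_apply_of_mem (N : E3 →ᵃ[ℝ] E3) {x y z w : E3}
    (hw : w ∈ Submodule.span ℝ {y - x, z - x}) : tangGrad N x y z w = N.linear w := by
  simp only [tangGrad, tangentProj, ContinuousLinearMap.comp_apply, Submodule.subtypeL_apply,
    LinearMap.coe_toContinuousLinearMap']
  congr 1
  exact Submodule.starProjection_eq_self_iff.mpr hw

lemma abs_inner_midpoint_le (N : E3 →ᵃ[ℝ] E3) {x y z : E3}
    (h₂ : ⟪N (midpoint ℝ y z), z - y⟫ = 0) :
    |⟪N (midpoint ℝ x y), z - y⟫| ≤ ‖tangGrad N x y z‖ * (‖z - x‖ / 2) * ‖z - y‖ := by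
  set w : E3 := (2⁻¹ : ℝ) • (z - x)
  have hw : w ∈ Submodule.span ℝ {y - x, z - x} :=
    Submodule.smul_mem _ _ (Submodule.subset_span (by simp))
  have hmid : midpoint ℝ y z - midpoint ℝ x y = w := by
    rw [midpoint_comm x y, ← vsub_eq_sub, midpoint_vsub_midpoint_same_left, invOf_eq_inv,
      vsub_eq_sub]
  have hN : N (midpoint ℝ y z) = N (midpoint ℝ x y) + tangGrad N x y z w := by
    rw [tangGrad_apply_of_mem N hw, ← hmid, ← vsub_eq_sub, N.linearMap_vsub, vsub_eq_sub,
      add_sub_cancel]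
  have hinner : ⟪N (midpoint ℝ x y), z - y⟫ = -⟪tangGrad N x y z w, z - y⟫ := by
    rw [hN, inner_add_left] at h₂
    linarith
  calc |⟪N (midpoint ℝ x y), z - y⟫|
      ≤ ‖tangGrad N x y z w‖ * ‖z - y‖ := by
        rw [hinner, abs_neg]; exact abs_real_inner_le_norm _ _
    _ ≤ ‖tangGrad N x y z‖ * ‖w‖ * ‖z - y‖ := by gcongr; exact (tangGrad N x y z).le_opNorm w
    _ = ‖tangGrad N x y z‖ * (‖z - x‖ / 2) * ‖z - y‖ := by
        rw [norm_smul, norm_inv, Real.norm_two]; ring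

lemma norm_sub_le_diam3 (x y z : E3) :
    ‖y - x‖ ≤ diam3 x y z ∧ ‖z - x‖ ≤ diam3 x y z ∧ ‖z - y‖ ≤ diam3 x y z :=
  ⟨le_max_left _ _, (le_max_left _ _).trans (le_max_right _ _),
    (le_max_right _ _).trans (le_max_right _ _)⟩

/-- the cross-product estimate
`|n̄(κ) × N(m₁)| ≤ C·diam(κ)·‖D‖`, valid without any normalization of the
edge director values. -/
theorem stmt_3 (Cstar : ℝ) (hCstar : 0 < Cstar) :
    ∃ C > (0 : ℝ), ∀ (x y z : E3) (N : E3 →ᵃ[ℝ] E3),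
      ¬ Collinear ℝ ({x, y, z} : Set E3) →
      Cstar * diam3 x y z ^ 2 ≤ area3 x y z →
      ⟪N (midpoint ℝ x y), y - x⟫ = 0 →
      ⟪N (midpoint ℝ y z), z - y⟫ = 0 →
      ‖cross3 (unitNormal x y z) (N (midpoint ℝ x y))‖ ≤
        C * diam3 x y z * ‖tangGrad N x y z‖ := by
  refine ⟨1 / (4 * Cstar), by positivity, fun x y z N hcol hreg h₁ h₂ => ?_⟩
  set d := diam3 x y z
  set D := ‖tangGrad N x y z‖
  obtain ⟨hyx, hzx, hzy⟩ := norm_sub_le_diam3 x y z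
  have hd : 0 < d :=
    (norm_pos_iff.mpr (sub_ne_zero.mpr (ne₁₂_of_not_collinear hcol).symm)).trans_le hyx
  have hnum : |⟪N (midpoint ℝ x y), z - y⟫| * ‖y - x‖ ≤ D * (d / 2) * d * d := by
    gcongr
    exact (abs_inner_midpoint_le N h₂).trans (by gcongr)
  have hden : 2 * Cstar * d ^ 2 ≤ ‖cross3 (y - x) (z - x)‖ := by
    rw [area3] at hreg; linarith
  rw [norm_cross3_unitNormal_of_inner_eq_zero h₁]
  calc _ ≤ D * (d / 2) * d * d / (2 * Cstar * d ^ 2) := div_le_div₀ (by positivity) hnum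
          (by positivity) hden
    _ = 1 / (4 * Cstar) * d * D := by field_simp; ring
end
end
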